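/- arXiv:2006.10840 — 4 statements merged into one kernel-verified Lean document; each statement's English description precedes it below -/
import Mathlib

section
/- Let H be a complex Hilbert space and let S, T : H → H be bounded self-adjoint linear operators with T injective. Suppose there is a constant C < ∞ such that ‖S f‖ ≤ C ‖T f‖ for all f ∈ H. Then the range of S is contained in the range of T, and for every f ∈ H the unique g ∈ H with T g = S f satisfies ‖g‖ ≤ C ‖f‖. -/
open scoped InnerProductSpace

/-- range-inclusion lemma, Lemma B.3.
If `S, T` are bounded self-adjoint operators on a complex Hilbert space `H`,
`T` is injective, and `‖S f‖ ≤ C ‖T f‖` for all `f`, then `Ran S ⊆ Ran T` and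
for every `f` the unique `g` with `T g = S f` satisfies `‖g‖ ≤ C ‖f‖`. -/
theorem range_inclusion_of_norm_le
    {H : Type*} [NormedAddCommGroup H] [InnerProductSpace ℂ H] [CompleteSpace H]
    (S T : H →L[ℂ] H) (hS : IsSelfAdjoint S) (hT : IsSelfAdjoint T)
    (hTinj : Function.Injective T)
    (C : ℝ) (hC : ∀ f : H, ‖S f‖ ≤ C * ‖T f‖) :
    Set.range S ⊆ Set.range T ∧
      ∀ f : H, ∃! g : H, T g = S f ∧ ‖g‖ ≤ C * ‖f‖ := by
  have hTinj' : Function.Injective (T : H →ₗ[ℂ] H) := hTinj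
  have key : ∀ f : H, ∃ g : H, T g = S f ∧ ‖g‖ ≤ C * ‖f‖ := by
    intro f
    by_cases hC0 : 0 ≤ C
    · -- build the functional h ↦ ⟪f, S h⟫ on the range of T and extend
      set ψ₀ : H →ₗ[ℂ] ℂ :=
        { toFun := fun h => ⟪f, S h⟫_ℂ
          map_add' := by intro a b; simp [inner_add_right]
          map_smul' := by intro c a; simp [inner_smul_right] }
      set e : H ≃ₗ[ℂ] LinearMap.range (T : H →ₗ[ℂ] H) :=
        LinearEquiv.ofInjective (T : H →ₗ[ℂ] H) hTinj'
      set φ : LinearMap.range (T : H →ₗ[ℂ] H) →ₗ[ℂ] ℂ := ψ₀.comp e.symm.toLinearMap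
      have hbound : ∀ x : LinearMap.range (T : H →ₗ[ℂ] H), ‖φ x‖ ≤ (C * ‖f‖) * ‖x‖ := by
        intro x
        set h := e.symm x with hh
        have hx : (x : H) = T h := by
          have : e h = x := by rw [hh]; exact e.apply_symm_apply x
          rw [← this]
          simp [e, LinearEquiv.ofInjective_apply]
        have hφ : φ x = ⟪f, S h⟫_ℂ := rfl
        calc ‖φ x‖ = ‖⟪f, S h⟫_ℂ‖ := by rw [hφ]
          _ ≤ ‖f‖ * ‖S h‖ := norm_inner_le_norm _ _
          _ ≤ ‖f‖ * (C * ‖T h‖) := by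
              have := hC h
              have hf0 : (0:ℝ) ≤ ‖f‖ := norm_nonneg _
              nlinarith
          _ = (C * ‖f‖) * ‖x‖ := by
              have : ‖x‖ = ‖T h‖ := by rw [← hx]; rfl
              rw [this]; ring
      set φL := φ.mkContinuous (C * ‖f‖) hbound with hφL
      obtain ⟨ψ, hψext, hψnorm⟩ := exists_extension_norm_eq _ φL
      have hψle : ‖ψ‖ ≤ C * ‖f‖ := by
        rw [hψnorm]
        exact φ.mkContinuous_norm_le (mul_nonneg hC0 (norm_nonneg _)) hbound
      set g := (InnerProductSpace.toDual ℂ H).symm ψ with hg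
      have hgnorm : ‖g‖ = ‖ψ‖ := (InnerProductSpace.toDual ℂ H).symm.norm_map ψ
      have hginner : ∀ x : H, ⟪g, x⟫_ℂ = ψ x := fun x =>
        InnerProductSpace.toDual_symm_apply
      refine ⟨g, ?_, by rw [hgnorm]; exact hψle⟩
      apply ext_inner_right ℂ
      intro h
      have h1 : ⟪T g, h⟫_ℂ = ⟪g, T h⟫_ℂ := by
        conv_lhs => rw [← hT.adjoint_eq]
        exact ContinuousLinearMap.adjoint_inner_left T h g
      have h2 : ⟪S f, h⟫_ℂ = ⟪f, S h⟫_ℂ := by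
        conv_lhs => rw [← hS.adjoint_eq]
        exact ContinuousLinearMap.adjoint_inner_left S h f
      rw [h1, h2, hginner]
      have hmem : T h ∈ LinearMap.range (T : H →ₗ[ℂ] H) := ⟨h, rfl⟩
      have := hψext ⟨T h, hmem⟩
      rw [this]
      have heq : (⟨T h, hmem⟩ : LinearMap.range (T : H →ₗ[ℂ] H)) = e h := by
        apply Subtype.ext
        simp [e, LinearEquiv.ofInjective_apply]
      have : φL ⟨T h, hmem⟩ = ψ₀ (e.symm (e h)) := by rw [heq]; rfl
      rw [this, e.symm_apply_apply]; rfl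
    · -- C < 0 forces H = 0
      push_neg at hC0
      have hzero : ∀ x : H, x = 0 := by
        intro x
        by_contra hx
        have hTx : T x ≠ 0 := fun h => hx (hTinj (by simpa using h))
        have h1 := hC x
        have h2 : (0:ℝ) < ‖T x‖ := norm_pos_iff.mpr hTx
        nlinarith [norm_nonneg (S x)]
      refine ⟨0, by simp [hzero f], by simp [hzero f]⟩
  constructor
  · rintro _ ⟨f, rfl⟩
    obtain ⟨g, hg, -⟩ := key f
    exact ⟨g, hg⟩
  · intro f
    obtain ⟨g, hg1, hg2⟩ := key f
    exact ⟨g, ⟨hg1, hg2⟩, fun g' hg' => hTinj (by rw [hg'.1, hg1])⟩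
end

section
/- Let A and B be bounded, self-adjoint, positive linear operators on a complex Hilbert space H such that ‖B h‖ ≤ ‖A h‖ for all h ∈ H. Then for every ν ∈ [0, 1] and every h ∈ H, ‖B^ν h‖ ≤ ‖A^ν h‖, where the fractional powers A^ν and B^ν are defined via the continuous functional calculus. -/
/-- Fractional power `A^r` (for `r : ℝ`) of a bounded operator, via the continuous
functional calculus for self-adjoint operators (real power `x ↦ x ^ r`). -/
noncomputable def opPow {H : Type*} [NormedAddCommGroup H] [InnerProductSpace ℂ H]
    [CompleteSpace H] (A : H →L[ℂ] H) (r : ℝ) : H →L[ℂ] H :=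
  cfc (fun x : ℝ => x ^ r) A

/-!
Squaring turns the hypothesis into the Löwner inequality `B² ≤ A²`, since
`⟪T*T h, h⟫ = ‖T h‖²`. Löwner–Heinz operator monotonicity of `a ↦ a ^ ν` for `ν ∈ [0, 1]`
(`CFC.rpow_le_rpow`) gives `(B²)^ν ≤ (A²)^ν`, that is `(B^ν)² ≤ (A^ν)²`, and reading this
inequality back through the same identity yields `‖B^ν h‖ ≤ ‖A^ν h‖`.
-/

namespace ContinuousLinearMap

variable {𝕜 E : Type*} [RCLike 𝕜] [NormedAddCommGroup E] [InnerProductSpace 𝕜 E]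
  [CompleteSpace E]

theorem re_inner_star_mul_self_apply (T : E →L[𝕜] E) (x : E) :
    RCLike.re (inner 𝕜 ((star T * T) x) x) = ‖T x‖ ^ 2 := by
  rw [apply_norm_sq_eq_inner_adjoint_left, star_eq_adjoint]
  rfl

theorem star_mul_self_le_star_mul_self_iff (T S : E →L[𝕜] E) :
    star T * T ≤ star S * S ↔ ∀ x, ‖T x‖ ≤ ‖S x‖ := by
  have hsa : IsSelfAdjoint (star S * S - star T * T) :=
    (IsSelfAdjoint.star_mul_self S).sub (IsSelfAdjoint.star_mul_self T)
  simp only [le_def, isPositive_def', hsa, true_and, reApplyInnerSelf, sub_apply,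
    inner_sub_left, map_sub, re_inner_star_mul_self_apply, sub_nonneg]
  exact forall_congr' fun x => pow_le_pow_iff_left₀ (norm_nonneg _) (norm_nonneg _) two_ne_zero

theorem _root_.IsSelfAdjoint.sq_le_sq_iff_norm_apply_le {T S : E →L[𝕜] E}
    (hT : IsSelfAdjoint T) (hS : IsSelfAdjoint S) : T ^ 2 ≤ S ^ 2 ↔ ∀ x, ‖T x‖ ≤ ‖S x‖ := by
  simpa only [hT.star_eq, hS.star_eq, sq] using star_mul_self_le_star_mul_self_iff T S

end ContinuousLinearMap

namespace CFC

variable {A : Type*} [CStarAlgebra A] [PartialOrder A] [StarOrderedRing A]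

theorem pow_rpow_comm (a : A) (n : ℕ) {p : ℝ} (hp : 0 ≤ p) (ha : 0 ≤ a := by cfc_tac) :
    (a ^ n) ^ p = (a ^ p) ^ n := by
  rw [← rpow_natCast a n, rpow_rpow_of_exponent_nonneg a _ _ n.cast_nonneg hp,
    ← rpow_natCast (a ^ p) n, rpow_rpow_of_exponent_nonneg a _ _ hp n.cast_nonneg, mul_comm]

end CFC

theorem opPow_eq_rpow {H : Type*} [NormedAddCommGroup H] [InnerProductSpace ℂ H]
    [CompleteSpace H] {A : H →L[ℂ] H} (hA : 0 ≤ A) (r : ℝ) : opPow A r = A ^ r :=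
  (CFC.rpow_eq_cfc_real hA).symm

open ContinuousLinearMap in
/-- Heinz inequality, Lemma B.2.
If `A, B` are bounded self-adjoint positive operators on a complex Hilbert space with
`‖B h‖ ≤ ‖A h‖` for all `h`, then for every `ν ∈ [0, 1]` and every `h`,
`‖B^ν h‖ ≤ ‖A^ν h‖`. -/
theorem heinz_inequality
    {H : Type*} [NormedAddCommGroup H] [InnerProductSpace ℂ H] [CompleteSpace H]
    (A B : H →L[ℂ] H) (hA : A.IsPositive) (hB : B.IsPositive)
    (hAB : ∀ h : H, ‖B h‖ ≤ ‖A h‖) :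
    ∀ ν ∈ Set.Icc (0 : ℝ) 1, ∀ h : H, ‖opPow B ν h‖ ≤ ‖opPow A ν h‖ := by
  intro ν hν
  have hA0 : 0 ≤ A := (nonneg_iff_isPositive A).2 hA
  have hB0 : 0 ≤ B := (nonneg_iff_isPositive B).2 hB
  have hsq : B ^ 2 ≤ A ^ 2 :=
    (hB.isSelfAdjoint.sq_le_sq_iff_norm_apply_le hA.isSelfAdjoint).2 hAB
  have hpow : (B ^ ν) ^ 2 ≤ (A ^ ν) ^ 2 := by
    rw [← CFC.pow_rpow_comm B 2 hν.1, ← CFC.pow_rpow_comm A 2 hν.1]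
    exact CFC.rpow_le_rpow hν hsq
  rw [opPow_eq_rpow hA0, opPow_eq_rpow hB0]
  exact (CFC.rpow_nonneg.isSelfAdjoint.sq_le_sq_iff_norm_apply_le
    CFC.rpow_nonneg.isSelfAdjoint).1 hpow
end

section
/- Suppose the link condition holds with exponent a > 0 and constant m > 0, let 0 ≤ s ≤ a, β := (a − s)/(2(a + s)), and let α ∈ [0, 1/2]. There exists a constant c < ∞, depending only on a, s, α and m, such that for every step size γ > 0 and every positive even integer T with γ‖T_s‖ < 1/4, every u ∈ H and every R > 0: ‖T_s^{α} R̄_T(T_s) u‖_H ≤ c (γT)^{−α} ( d(R) + R (γT)^{−β} ). (This is the first bound of Proposition C.1; R̄_T(T_s) u = L^s(f_H − g̃_T) is the approximation error of tail-averaged gradient descent in the Hilbert scale.) -/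
/-- The tail-averaged gradient-descent filter operator
`Ḡ_T(Q) = (2/T) ∑_{t=T/2+1}^{T} γ ∑_{k=0}^{t-1} (I - γQ)^k`. -/
noncomputable def Gbar {H : Type*} [NormedAddCommGroup H] [InnerProductSpace ℂ H]
    [CompleteSpace H] (γ : ℝ) (T : ℕ) (Q : H →L[ℂ] H) : H →L[ℂ] H :=
  (2 / (T : ℂ)) • ∑ t ∈ Finset.Ioc (T / 2) T,
    (γ : ℂ) • ∑ k ∈ Finset.range t, (1 - (γ : ℂ) • Q) ^ k

/-- The tail-averaged gradient-descent residual operator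
`R̄_T(Q) = (2/T) ∑_{t=T/2+1}^{T} (I - γQ)^t`. -/
noncomputable def Rbar {H : Type*} [NormedAddCommGroup H] [InnerProductSpace ℂ H]
    [CompleteSpace H] (γ : ℝ) (T : ℕ) (Q : H →L[ℂ] H) : H →L[ℂ] H :=
  (2 / (T : ℂ)) • ∑ t ∈ Finset.Ioc (T / 2) T, (1 - (γ : ℂ) • Q) ^ t

/-- The operator `T_s = B_s^* ∘ B_s` where `B_s = S ∘ A^s` (with `A = L⁻¹`). -/
noncomputable def Ts {H K : Type*} [NormedAddCommGroup H] [InnerProductSpace ℂ H]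
    [CompleteSpace H] [NormedAddCommGroup K] [InnerProductSpace ℂ K] [CompleteSpace K]
    (S : H →L[ℂ] K) (A : H →L[ℂ] H) (s : ℝ) : H →L[ℂ] H :=
  ContinuousLinearMap.adjoint (S ∘L opPow A s) ∘L (S ∘L opPow A s)

/-- The distance function `d(R) = inf { ‖A^{a-s} h - u‖ : ‖h‖ ≤ R }` (Definition 1,
expressed through `A = L⁻¹`, with `u = L^s f_H`). -/
noncomputable def distFn {H : Type*} [NormedAddCommGroup H] [InnerProductSpace ℂ H]
    [CompleteSpace H] (A : H →L[ℂ] H) (a s : ℝ) (u : H) (R : ℝ) : ℝ :=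
  ⨅ h : { h : H // ‖h‖ ≤ R }, ‖opPow A (a - s) h.1 - u‖

/-!
Through the continuous functional calculus, `T_s^α R̄_T(T_s)` is `φ(T_s)` for the scalar filter
`φ(x) = x^α r̄_T(x)`, and on `[0, 1/γ]` one has `x^θ r̄_T(x) ≤ (γT)^{-θ}` for `θ ∈ [0, 1]`,
because `r̄_T(x) ≤ exp(-γxT/2)`. For `‖h‖ ≤ R`, split `u = (u - A^{a-s} h) + A^{a-s} h`: the first
part costs `(γT)^{-α} ‖A^{a-s} h - u‖`. For the second, the link condition says
`A^{2(a+s)} ≤ m^{-2} T_s`, and Löwner–Heinz with exponent `(a-s)/(a+s) = 2β` gives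
`‖A^{a-s} w‖ ≤ m^{-2β} ‖T_s^β w‖`, so `‖T_s^α R̄_T(T_s) A^{a-s}‖ ≤ m^{-2β} (γT)^{-(α+β)}`.
-/

noncomputable def rbar (γ : ℝ) (T : ℕ) (x : ℝ) : ℝ :=
  2 / T * ∑ t ∈ Finset.Ioc (T / 2) T, (1 - γ * x) ^ t

section Scalar

variable {γ x : ℝ} {T : ℕ}

lemma rbar_nonneg (h : γ * x ≤ 1) : 0 ≤ rbar γ T x :=
  mul_nonneg (by positivity) (Finset.sum_nonneg fun t _ => pow_nonneg (by linarith) t)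

lemma rbar_two_mul_le_exp (h0 : 0 ≤ γ * x) (h1 : γ * x ≤ 1) (k : ℕ) :
    rbar γ (2 * k) x ≤ Real.exp (-(γ * x * k)) := by
  set b := 1 - γ * x
  have hb0 : 0 ≤ b := by linarith
  have hb1 : b ≤ 1 := by linarith
  have hsum : ∑ t ∈ Finset.Ioc k (2 * k), b ^ t ≤ k * b ^ k := by
    calc ∑ t ∈ Finset.Ioc k (2 * k), b ^ t ≤ ∑ _t ∈ Finset.Ioc k (2 * k), b ^ k :=
          Finset.sum_le_sum fun t ht => pow_le_pow_of_le_one hb0 hb1 (Finset.mem_Ioc.mp ht).1.le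
      _ = k * b ^ k := by simp [Nat.card_Ioc, show 2 * k - k = k by omega]
  have hexp : b ^ k ≤ Real.exp (-(γ * x * k)) := by
    rw [show -(γ * x * k) = k * -(γ * x) by ring, Real.exp_nat_mul]
    exact pow_le_pow_left₀ hb0 (by linarith [Real.add_one_le_exp (-(γ * x))]) k
  rcases k.eq_zero_or_pos with rfl | hk
  · simp [rbar]
  calc rbar γ (2 * k) x ≤ 2 / (2 * k : ℕ) * (k * b ^ k) := by
        unfold rbar
        rw [show 2 * k / 2 = k by omega]
        gcongr
    _ = b ^ k := by push_cast; field_simp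
    _ ≤ _ := hexp

lemma rpow_mul_exp_neg_half_le_one {z θ : ℝ} (hz : 0 ≤ z) (hθ0 : 0 ≤ θ) (hθ1 : θ ≤ 1) :
    z ^ θ * Real.exp (-(z / 2)) ≤ 1 := by
  have hle : z ^ θ ≤ Real.exp (z / 2) := by
    rcases le_or_gt z 1 with h1 | h1
    · exact (Real.rpow_le_one hz h1 hθ0).trans (Real.one_le_exp (by linarith))
    · calc z ^ θ ≤ z ^ (1 : ℝ) := Real.rpow_le_rpow_of_exponent_le h1.le hθ1
        _ ≤ 1 + z / 2 + (z / 2) ^ 2 / 2 := by rw [Real.rpow_one]; nlinarith [sq_nonneg (z - 2)]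
        _ ≤ Real.exp (z / 2) := Real.quadratic_le_exp_of_nonneg (by linarith)
  rw [Real.exp_neg, ← div_eq_mul_inv, div_le_one (Real.exp_pos _)]
  exact hle

lemma rpow_mul_rbar_le (hγ : 0 < γ) (hT : 0 < T) (hTe : Even T) (hx : 0 ≤ x)
    (hγx : γ * x ≤ 1) {θ : ℝ} (hθ0 : 0 ≤ θ) (hθ1 : θ ≤ 1) :
    x ^ θ * rbar γ T x ≤ (γ * T) ^ (-θ) := by
  obtain ⟨k, rfl⟩ := hTe
  rw [← two_mul] at hT ⊢
  have hγT : 0 < γ * ↑(2 * k) := by positivity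
  have hz : 0 ≤ γ * ↑(2 * k) * x := by positivity
  calc x ^ θ * rbar γ (2 * k) x ≤ x ^ θ * Real.exp (-(γ * x * k)) := by
        gcongr
        exact rbar_two_mul_le_exp (by positivity) hγx k
    _ = (γ * ↑(2 * k)) ^ (-θ) *
          ((γ * ↑(2 * k) * x) ^ θ * Real.exp (-(γ * ↑(2 * k) * x / 2))) := by
        rw [Real.mul_rpow hγT.le hx, Real.rpow_neg hγT.le]
        field_simp
        push_cast
        ring_nf
    _ ≤ (γ * ↑(2 * k)) ^ (-θ) * 1 := by
        gcongr
        exact rpow_mul_exp_neg_half_le_one hz hθ0 hθ1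
    _ = _ := mul_one _

end Scalar

section Adjoint

variable {𝕜 E F G : Type*} [RCLike 𝕜] [NormedAddCommGroup E] [InnerProductSpace 𝕜 E]
  [NormedAddCommGroup F] [InnerProductSpace 𝕜 F] [NormedAddCommGroup G] [InnerProductSpace 𝕜 G]
  [CompleteSpace E] [CompleteSpace F] [CompleteSpace G]

open ContinuousLinearMap in
lemma adjoint_comp_self_le_iff (X : E →L[𝕜] F) (Y : E →L[𝕜] G) :
    adjoint X ∘L X ≤ adjoint Y ∘L Y ↔ ∀ w, ‖X w‖ ≤ ‖Y w‖ := by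
  have hsa : IsSelfAdjoint (adjoint Y ∘L Y - adjoint X ∘L X) :=
    (isPositive_adjoint_comp_self Y).isSelfAdjoint.sub
      (isPositive_adjoint_comp_self X).isSelfAdjoint
  simp only [le_def, isPositive_def', hsa, true_and, reApplyInnerSelf_apply, sub_apply,
    inner_sub_left, map_sub, ← apply_norm_sq_eq_inner_adjoint_left, sub_nonneg]
  exact forall_congr' fun w => pow_le_pow_iff_left₀ (norm_nonneg _) (norm_nonneg _) two_ne_zero

end Adjoint

lemma norm_mul_comm_of_isSelfAdjoint {E : Type*} [NonUnitalNormedRing E] [StarRing E]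
    [NormedStarGroup E] {x y : E} (hx : IsSelfAdjoint x) (hy : IsSelfAdjoint y) :
    ‖x * y‖ = ‖y * x‖ := by
  rw [← norm_star, star_mul, hx.star_eq, hy.star_eq]

section Operators

variable {H : Type*} [NormedAddCommGroup H] [InnerProductSpace ℂ H] [CompleteSpace H]

lemma Rbar_eq_cfc (γ : ℝ) (T : ℕ) {Q : H →L[ℂ] H} (hQ : IsSelfAdjoint Q) :
    Rbar γ T Q = cfc (rbar γ T) Q := by
  have hstep : ∀ t : ℕ, (1 - (γ : ℂ) • Q) ^ t = cfc (fun x : ℝ => (1 - γ * x) ^ t) Q := by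
    intro t
    rw [cfc_pow .., cfc_sub .., cfc_const_one .., cfc_const_mul_id .., ← Complex.coe_smul]
  have hsum : ∑ t ∈ Finset.Ioc (T / 2) T, (1 - (γ : ℂ) • Q) ^ t
      = cfc (fun x : ℝ => ∑ t ∈ Finset.Ioc (T / 2) T, (1 - γ * x) ^ t) Q := by
    rw [← Finset.sum_fn, cfc_sum (fun t (x : ℝ) => (1 - γ * x) ^ t) Q _ (fun _ _ => by fun_prop)]
    exact Finset.sum_congr rfl fun t _ => hstep t
  rw [Rbar, hsum, show (2 / (T : ℂ)) = ((2 / T : ℝ) : ℂ) by push_cast; rfl, Complex.coe_smul,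
    ← cfc_const_mul ..]
  rfl

lemma opPow_nonneg {X : H →L[ℂ] H} (hX : 0 ≤ X) (r : ℝ) : 0 ≤ opPow X r :=
  cfc_nonneg fun _ hx => Real.rpow_nonneg (spectrum_nonneg_of_nonneg hX hx) r

lemma opPow_one {X : H →L[ℂ] H} (hX : 0 ≤ X) : opPow X 1 = X := by
  simp only [opPow, Real.rpow_one]
  exact cfc_id' ℝ X

lemma opPow_mul_opPow {X : H →L[ℂ] H} (hX : 0 ≤ X) {r r' : ℝ} (hr : 0 ≤ r) (hr' : 0 ≤ r') :
    opPow X r * opPow X r' = opPow X (r + r') := by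
  rw [opPow, opPow, opPow, ← cfc_mul _ _ X (Real.continuous_rpow_const hr).continuousOn
    (Real.continuous_rpow_const hr').continuousOn]
  exact cfc_congr fun x hx =>
    (Real.rpow_add_of_nonneg (spectrum_nonneg_of_nonneg hX hx) hr hr').symm

lemma opPow_opPow {X : H →L[ℂ] H} (hX : 0 ≤ X) {r r' : ℝ} (hr : 0 ≤ r) (hr' : 0 ≤ r') :
    opPow (opPow X r) r' = opPow X (r * r') := by
  simp only [opPow]
  rw [← cfc_comp' (fun x : ℝ => x ^ r') (fun x : ℝ => x ^ r) X
    (Real.continuous_rpow_const hr').continuousOn (Real.continuous_rpow_const hr).continuousOn]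
  exact cfc_congr fun x hx => (Real.rpow_mul (spectrum_nonneg_of_nonneg hX hx) r r').symm

lemma opPow_smul {X : H →L[ℂ] H} (hX : 0 ≤ X) {c : ℝ} (hc : 0 ≤ c) {r : ℝ} (hr : 0 ≤ r) :
    opPow (c • X) r = c ^ r • opPow X r := by
  have hcont := Real.continuous_rpow_const hr
  rw [opPow, opPow, ← cfc_comp_smul c _ X hcont.continuousOn, ← cfc_smul _ _ X hcont.continuousOn]
  exact cfc_congr fun x hx => Real.mul_rpow hc (spectrum_nonneg_of_nonneg hX hx)

lemma opPow_mul_Rbar_eq_cfc {Q : H →L[ℂ] H} (hQ : IsSelfAdjoint Q) {θ : ℝ} (hθ : 0 ≤ θ)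
    (γ : ℝ) (T : ℕ) :
    opPow Q θ * Rbar γ T Q = cfc (fun x => x ^ θ * rbar γ T x) Q := by
  rw [Rbar_eq_cfc γ T hQ, opPow, ← cfc_mul _ _ Q (Real.continuous_rpow_const hθ).continuousOn
    (by unfold rbar; fun_prop)]

lemma norm_opPow_mul_Rbar_le {Q : H →L[ℂ] H} (hQ : 0 ≤ Q) {γ : ℝ} {T : ℕ} (hγ : 0 < γ)
    (hT : 0 < T) (hTe : Even T) (hγQ : γ * ‖Q‖ ≤ 1) {θ : ℝ} (hθ0 : 0 ≤ θ) (hθ1 : θ ≤ 1) :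
    ‖opPow Q θ * Rbar γ T Q‖ ≤ (γ * T) ^ (-θ) := by
  rw [opPow_mul_Rbar_eq_cfc hQ.isSelfAdjoint hθ0]
  refine norm_cfc_le (by positivity) fun x hx => ?_
  have hx0 : 0 ≤ x := spectrum_nonneg_of_nonneg hQ hx
  have hγx : γ * x ≤ 1 := by
    have : x ≤ ‖Q‖ :=
      (le_algebraMap_iff_spectrum_le (R := ℝ)).mp hQ.isSelfAdjoint.le_algebraMap_norm_self x hx
    nlinarith
  rw [Real.norm_of_nonneg (mul_nonneg (by positivity) (rbar_nonneg hγx))]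
  exact rpow_mul_rbar_le hγ hT hTe hx0 hγx hθ0 hθ1

lemma opPow_eq_rpow_s6 {X : H →L[ℂ] H} (hX : 0 ≤ X) (r : ℝ) : opPow X r = X ^ r :=
  (CFC.rpow_eq_cfc_real hX).symm

lemma adjoint_comp_self_eq_opPow_two {X : H →L[ℂ] H} (hX : 0 ≤ X) :
    ContinuousLinearMap.adjoint X ∘L X = opPow X 2 := by
  rw [hX.isSelfAdjoint.adjoint_eq, ← ContinuousLinearMap.mul_def, ← opPow_one hX,
    opPow_mul_opPow (opPow_one hX ▸ hX) zero_le_one zero_le_one, opPow_one hX]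
  norm_num

/-- Heinz inequality, from Löwner–Heinz applied to `X * X ≤ Y * Y`. -/
lemma norm_opPow_apply_le {X Y : H →L[ℂ] H} (hX : 0 ≤ X) (hY : 0 ≤ Y)
    (hXY : ∀ w, ‖X w‖ ≤ ‖Y w‖) {θ : ℝ} (hθ0 : 0 ≤ θ) (hθ1 : θ ≤ 1) (w : H) :
    ‖opPow X θ w‖ ≤ ‖opPow Y θ w‖ := by
  have hsq : ∀ {Z : H →L[ℂ] H}, 0 ≤ Z →
      ContinuousLinearMap.adjoint (opPow Z θ) ∘L opPow Z θ = opPow (opPow Z 2) θ := by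
    intro Z hZ
    rw [adjoint_comp_self_eq_opPow_two (opPow_nonneg hZ θ), opPow_opPow hZ hθ0 zero_le_two,
      opPow_opPow hZ zero_le_two hθ0, mul_comm]
  have hmono : opPow (opPow X 2) θ ≤ opPow (opPow Y 2) θ := by
    rw [opPow_eq_rpow_s6 (opPow_nonneg hX 2), opPow_eq_rpow_s6 (opPow_nonneg hY 2)]
    refine CFC.rpow_le_rpow ⟨hθ0, hθ1⟩ ?_
    rw [← adjoint_comp_self_eq_opPow_two hX, ← adjoint_comp_self_eq_opPow_two hY]
    exact (adjoint_comp_self_le_iff X Y).mpr hXY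
  rw [← hsq hX, ← hsq hY] at hmono
  exact (adjoint_comp_self_le_iff _ _).mp hmono w

variable {K : Type*} [NormedAddCommGroup K] [InnerProductSpace ℂ K] [CompleteSpace K]

lemma adjoint_comp_self_nonneg (B : H →L[ℂ] K) : 0 ≤ ContinuousLinearMap.adjoint B ∘L B :=
  (ContinuousLinearMap.nonneg_iff_isPositive _).mpr (B.isPositive_adjoint_comp_self)

lemma norm_opPow_half_adjoint_comp_self_apply (B : H →L[ℂ] K) (w : H) :
    ‖opPow (ContinuousLinearMap.adjoint B ∘L B) (1 / 2) w‖ = ‖B w‖ := by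
  have hQ := adjoint_comp_self_nonneg B
  have hsq : ContinuousLinearMap.adjoint (opPow (ContinuousLinearMap.adjoint B ∘L B) (1 / 2)) ∘L
      opPow (ContinuousLinearMap.adjoint B ∘L B) (1 / 2) = ContinuousLinearMap.adjoint B ∘L B := by
    rw [adjoint_comp_self_eq_opPow_two (opPow_nonneg hQ _), opPow_opPow hQ (by norm_num)
      zero_le_two, one_div_mul_cancel two_ne_zero, opPow_one hQ]
  exact le_antisymm ((adjoint_comp_self_le_iff _ _).mp hsq.le w)
    ((adjoint_comp_self_le_iff _ _).mp hsq.ge w)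

lemma norm_opPow_sub_apply_le {A : H →L[ℂ] H} (hA : 0 ≤ A) {S : H →L[ℂ] K} {a s m : ℝ}
    (ha : 0 < a) (hs : 0 ≤ s) (hsa : s ≤ a) (hm : 0 < m)
    (hlink : ∀ h, m * ‖opPow A a h‖ ≤ ‖S h‖) (w : H) :
    ‖opPow A (a - s) w‖ ≤
      m⁻¹ ^ ((a - s) / (a + s)) * ‖opPow (Ts S A s) ((a - s) / (2 * (a + s))) w‖ := by
  set Q := Ts S A s
  have hQ : 0 ≤ Q := adjoint_comp_self_nonneg _
  have has : 0 < a + s := by linarith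
  set θ := (a - s) / (a + s)
  have hθ0 : 0 ≤ θ := div_nonneg (by linarith) has.le
  have hθ1 : θ ≤ 1 := (div_le_one has).mpr (by linarith)
  have hlink' : ∀ w, ‖opPow A (a + s) w‖ ≤ ‖(m⁻¹ • opPow Q (1 / 2)) w‖ := by
    intro w
    have hhalf : ‖opPow Q (1 / 2) w‖ = ‖S (opPow A s w)‖ :=
      norm_opPow_half_adjoint_comp_self_apply (S ∘L opPow A s) w
    rw [smul_apply, norm_smul, hhalf, ← opPow_mul_opPow hA ha.le hs,
      Real.norm_of_nonneg (inv_nonneg.mpr hm.le), le_inv_mul_iff₀ hm]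
    exact hlink _
  have heinz := norm_opPow_apply_le (opPow_nonneg hA _)
    (smul_nonneg (inv_nonneg.mpr hm.le) (opPow_nonneg hQ _)) hlink' hθ0 hθ1 w
  rwa [opPow_opPow hA has.le hθ0, mul_div_cancel₀ _ has.ne', opPow_smul (opPow_nonneg hQ _)
    (inv_nonneg.mpr hm.le) hθ0, opPow_opPow hQ (by norm_num) hθ0, smul_apply,
    norm_smul, Real.norm_of_nonneg (by positivity), one_div_mul_eq_div, div_div,
    mul_comm _ (2 : ℝ)] at heinz

lemma norm_opPow_mul_Rbar_mul_opPow_sub_le {A : H →L[ℂ] H} (hA : 0 ≤ A) {S : H →L[ℂ] K}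
    {a s m α γ : ℝ} {T : ℕ} (ha : 0 < a) (hs : 0 ≤ s) (hsa : s ≤ a) (hm : 0 < m)
    (hlink : ∀ h, m * ‖opPow A a h‖ ≤ ‖S h‖) (hα0 : 0 ≤ α) (hα1 : α ≤ 1 / 2) (hγ : 0 < γ)
    (hT : 0 < T) (hTe : Even T) (hγQ : γ * ‖Ts S A s‖ ≤ 1) :
    ‖opPow (Ts S A s) α * Rbar γ T (Ts S A s) * opPow A (a - s)‖ ≤
      m⁻¹ ^ ((a - s) / (a + s)) * (γ * T) ^ (-(α + (a - s) / (2 * (a + s)))) := by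
  set Q := Ts S A s
  have hQ : 0 ≤ Q := adjoint_comp_self_nonneg _
  set β := (a - s) / (2 * (a + s))
  have hβ0 : 0 ≤ β := div_nonneg (by linarith) (by linarith)
  have hβ1 : β ≤ 1 / 2 := by
    rw [div_le_iff₀ (by linarith)]
    linarith
  set C := opPow Q α * Rbar γ T Q
  have hCsa : IsSelfAdjoint C := by
    simp only [C, opPow_mul_Rbar_eq_cfc hQ.isSelfAdjoint hα0]
    exact cfc_predicate _ _
  have hQβC : ‖opPow Q β * C‖ ≤ (γ * T) ^ (-(α + β)) := by
    rw [← mul_assoc, opPow_mul_opPow hQ hβ0 hα0, add_comm]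
    exact norm_opPow_mul_Rbar_le hQ hγ hT hTe hγQ (by positivity) (by linarith)
  rw [norm_mul_comm_of_isSelfAdjoint hCsa (opPow_nonneg hA _).isSelfAdjoint]
  refine ContinuousLinearMap.opNorm_le_bound _ (by positivity) fun v => ?_
  calc ‖opPow A (a - s) (C v)‖ ≤ m⁻¹ ^ ((a - s) / (a + s)) * ‖(opPow Q β * C) v‖ :=
        norm_opPow_sub_apply_le hA ha hs hsa hm hlink (C v)
    _ ≤ m⁻¹ ^ ((a - s) / (a + s)) * ((γ * T) ^ (-(α + β)) * ‖v‖) := by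
        gcongr
        exact ContinuousLinearMap.le_of_opNorm_le _ hQβC v
    _ = _ := by ring

end Operators

lemma norm_apply_le_mul_iInf_add {𝕜 E F G : Type*} [NontriviallyNormedField 𝕜]
    [SeminormedAddCommGroup E] [NormedSpace 𝕜 E] [SeminormedAddCommGroup F] [NormedSpace 𝕜 F]
    [SeminormedAddCommGroup G] [NormedSpace 𝕜 G] (C : E →L[𝕜] F) (D : G →L[𝕜] E) (u : E)
    {R : ℝ} (hR : 0 ≤ R) :
    ‖C u‖ ≤ ‖C‖ * (⨅ h : {h : G // ‖h‖ ≤ R}, ‖D h.1 - u‖) + ‖C ∘L D‖ * R := by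
  have : Nonempty {h : G // ‖h‖ ≤ R} := ⟨⟨0, by simpa using hR⟩⟩
  suffices ‖C u‖ - ‖C ∘L D‖ * R ≤ ⨅ h : {h : G // ‖h‖ ≤ R}, ‖C‖ * ‖D h.1 - u‖ by
    rw [Real.mul_iInf_of_nonneg (norm_nonneg C)]
    linarith
  refine le_ciInf fun ⟨h, hh⟩ => ?_
  have hsplit : C u = C (u - D h) + (C ∘L D) h := by simp
  have hCD : ‖(C ∘L D) h‖ ≤ ‖C ∘L D‖ * R := (C ∘L D).le_opNorm_of_le hh
  have hC : ‖C (u - D h)‖ ≤ ‖C‖ * ‖D h - u‖ := norm_sub_rev (D h) u ▸ C.le_opNorm _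
  linarith [hsplit ▸ norm_add_le (C (u - D h)) ((C ∘L D) h)]

/-- Proposition C.1, first bound.
Under the link condition with `a > 0`, `m > 0`, `0 ≤ s ≤ a`, `β = (a-s)/(2(a+s))`,
and `α ∈ [0, 1/2]`, there is a constant `c` (depending only on `a, s, α, m`) such
that for all step sizes `γ > 0` and positive even integers `T` with `γ‖T_s‖ < 1/4`,
all `u ∈ H` and all `R > 0`:
`‖T_s^α R̄_T(T_s) u‖ ≤ c (γT)^{-α} (d(R) + R (γT)^{-β})`. -/
theorem approximation_error_bound
    {H K : Type*} [NormedAddCommGroup H] [InnerProductSpace ℂ H] [CompleteSpace H]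
    [NormedAddCommGroup K] [InnerProductSpace ℂ K] [CompleteSpace K]
    (a s m α : ℝ) (ha : 0 < a) (hs : 0 ≤ s) (hsa : s ≤ a) (hm : 0 < m)
    (hα : α ∈ Set.Icc (0 : ℝ) (1 / 2)) :
    ∃ c : ℝ, ∀ (A : H →L[ℂ] H) (S : H →L[ℂ] K),
      A.IsPositive → Function.Injective A →
      (∀ h : H, m * ‖opPow A a h‖ ≤ ‖S h‖) →
      ∀ (γ : ℝ) (T : ℕ), 0 < γ → 0 < T → Even T → γ * ‖Ts S A s‖ < 1 / 4 →
      ∀ (u : H) (R : ℝ), 0 < R →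
        ‖opPow (Ts S A s) α (Rbar γ T (Ts S A s) u)‖ ≤
          c * (γ * (T : ℝ)) ^ (-α) *
            (distFn A a s u R + R * (γ * (T : ℝ)) ^ (-((a - s) / (2 * (a + s))))) := by
  obtain ⟨hα0, hα1⟩ := hα
  refine ⟨1 + m⁻¹ ^ ((a - s) / (a + s)),
    fun A S hA _ hlink γ T hγ hT hTe hγQ u R hR => ?_⟩
  have hA0 : 0 ≤ A := (ContinuousLinearMap.nonneg_iff_isPositive A).mpr hA
  have hγT : 0 < γ * (T : ℝ) := by positivity
  have hQ : 0 ≤ Ts S A s := adjoint_comp_self_nonneg _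
  have hC := norm_opPow_mul_Rbar_le hQ hγ hT hTe (by linarith) hα0 (by linarith)
  have hCD := norm_opPow_mul_Rbar_mul_opPow_sub_le hA0 ha hs hsa hm hlink hα0 hα1 hγ hT hTe
    (by linarith)
  rw [neg_add, Real.rpow_add hγT] at hCD
  have hd : 0 ≤ distFn A a s u R := Real.iInf_nonneg fun _ => norm_nonneg _
  have hM : 0 ≤ m⁻¹ ^ ((a - s) / (a + s)) := by positivity
  calc ‖opPow (Ts S A s) α (Rbar γ T (Ts S A s) u)‖
      ≤ ‖opPow (Ts S A s) α * Rbar γ T (Ts S A s)‖ * distFn A a s u R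
        + ‖opPow (Ts S A s) α * Rbar γ T (Ts S A s) * opPow A (a - s)‖ * R :=
        norm_apply_le_mul_iInf_add (opPow (Ts S A s) α * Rbar γ T (Ts S A s))
          (opPow A (a - s)) u hR.le
    _ ≤ (γ * T) ^ (-α) * distFn A a s u R + m⁻¹ ^ ((a - s) / (a + s)) *
          ((γ * T) ^ (-α) * (γ * T) ^ (-((a - s) / (2 * (a + s))))) * R := by
        gcongr
    _ ≤ _ := by
        nlinarith [mul_nonneg (mul_nonneg hM (Real.rpow_nonneg hγT.le (-α))) hd,
          mul_nonneg (mul_nonneg (Real.rpow_nonneg hγT.le (-α)) hR.le)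
            (Real.rpow_nonneg hγT.le (-((a - s) / (2 * (a + s)))))]
end

section
/- Let Q be a bounded, positive, self-adjoint operator on a complex Hilbert space H, let γ > 0 and let T be a positive even integer with γ‖Q‖ ≤ 1, and set λ := (γT)^{−1}. Then ‖(Q + λ I) Ḡ_T(Q)‖ ≤ 3; moreover ‖Q Ḡ_T(Q)‖ ≤ 1 and ‖Ḡ_T(Q)‖ ≤ γT. -/
/-!
`Ḡ_T(Q)` and `Q Ḡ_T(Q)` are `g(Q)` and `(x ↦ x g(x))(Q)` in the continuous functional calculus,
for the scalar filter `g(x) = (2/T) ∑_{t=T/2+1}^{T} γ ∑_{k<t} (1 - γx)^k`, so it suffices to bound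
these functions on the spectrum of `Q`, which lies in `[0, ‖Q‖]`. There `a := 1 - γx ∈ [0, 1]`, so
each of the `T/2` summands of `g` lies in `[0, γT]`, while `x g(x) = (2/T) ∑_t (1 - a^t)` (the
scalar form of `Q Ḡ_T = I - R̄_T`) is an average of numbers in `[0, 1]`. The triangle inequality
then gives `‖(Q + λ) Ḡ_T(Q)‖ ≤ 1 + λγT = 2`.
-/

open Finset

lemma tail_average_mem_Icc {T : ℕ} (hT : Even T) {f : ℕ → ℝ} {c : ℝ} (hc : 0 ≤ c)
    (hf : ∀ t ∈ Ioc (T / 2) T, f t ∈ Set.Icc 0 c) :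
    2 / (T : ℝ) * ∑ t ∈ Ioc (T / 2) T, f t ∈ Set.Icc 0 c := by
  have hcard : ((#(Ioc (T / 2) T) : ℕ) : ℝ) = T / 2 := by
    rw [Nat.card_Ioc, Nat.cast_sub (Nat.div_le_self T 2),
      Nat.cast_div hT.two_dvd two_ne_zero]
    ring
  have hsum : ∑ t ∈ Ioc (T / 2) T, f t ≤ T / 2 * c := by
    have := sum_le_card_nsmul _ _ c fun t ht => (hf t ht).2
    rwa [nsmul_eq_mul, hcard] at this
  refine ⟨mul_nonneg (by positivity) (sum_nonneg fun t ht => (hf t ht).1), ?_⟩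
  calc 2 / (T : ℝ) * ∑ t ∈ Ioc (T / 2) T, f t ≤ 2 / T * (T / 2 * c) := by gcongr
    _ ≤ c := by
      rcases eq_or_ne (T : ℝ) 0 with h | h
      · simpa [h] using hc
      · exact le_of_eq (by field_simp)

lemma geom_sum_mem_Icc {a : ℝ} (ha : a ∈ Set.Icc 0 1) (t : ℕ) :
    ∑ k ∈ range t, a ^ k ∈ Set.Icc 0 (t : ℝ) :=
  ⟨sum_nonneg fun k _ => pow_nonneg ha.1 k,
    by simpa using sum_le_card_nsmul (range t) (a ^ ·) 1 fun k _ => pow_le_one₀ ha.1 ha.2⟩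

lemma one_sub_pow_mem_Icc {a : ℝ} (ha : a ∈ Set.Icc 0 1) (t : ℕ) : 1 - a ^ t ∈ Set.Icc 0 1 :=
  ⟨sub_nonneg.2 (pow_le_one₀ ha.1 ha.2), sub_le_self _ (pow_nonneg ha.1 t)⟩

noncomputable def gbar (γ : ℝ) (T : ℕ) (x : ℝ) : ℝ :=
  2 / (T : ℝ) * ∑ t ∈ Ioc (T / 2) T, γ * ∑ k ∈ range t, (1 - γ * x) ^ k

@[fun_prop]
lemma continuous_gbar (γ : ℝ) (T : ℕ) : Continuous (gbar γ T) := by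
  unfold gbar
  fun_prop

lemma mul_gbar (γ : ℝ) (T : ℕ) (x : ℝ) :
    x * gbar γ T x = 2 / (T : ℝ) * ∑ t ∈ Ioc (T / 2) T, (1 - (1 - γ * x) ^ t) := by
  rw [gbar, mul_left_comm, mul_sum]
  congr 1
  refine sum_congr rfl fun t _ => ?_
  linear_combination -geom_sum_mul (1 - γ * x) t

section ScalarBounds

variable {γ : ℝ} {T : ℕ} {x : ℝ}

lemma gbar_mem_Icc (hγ : 0 ≤ γ) (hT : Even T) (hx : 1 - γ * x ∈ Set.Icc 0 1) :
    gbar γ T x ∈ Set.Icc 0 (γ * T) := by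
  refine tail_average_mem_Icc hT (by positivity) fun t ht => ?_
  have hS := geom_sum_mem_Icc hx t
  have htT : (t : ℝ) ≤ T := by exact_mod_cast (mem_Ioc.1 ht).2
  exact ⟨mul_nonneg hγ hS.1, mul_le_mul_of_nonneg_left (hS.2.trans htT) hγ⟩

lemma mul_gbar_mem_Icc (hT : Even T) (hx : 1 - γ * x ∈ Set.Icc 0 1) :
    x * gbar γ T x ∈ Set.Icc 0 1 := by
  rw [mul_gbar]
  exact tail_average_mem_Icc hT zero_le_one fun t _ => one_sub_pow_mem_Icc hx t

end ScalarBounds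

section CStarAlgebra

variable {A : Type*} [CStarAlgebra A]

lemma spectrum_subset_Icc_norm [PartialOrder A] [StarOrderedRing A] {a : A} (ha : 0 ≤ a) :
    spectrum ℝ a ⊆ Set.Icc 0 ‖a‖ := fun x hx =>
  ⟨spectrum_nonneg_of_nonneg ha hx,
    (le_algebraMap_iff_spectrum_le (IsSelfAdjoint.of_nonneg ha)).1
      (IsSelfAdjoint.of_nonneg ha).le_algebraMap_norm_self x hx⟩

lemma norm_cfc_le_of_mem_Icc {a : A} {f : ℝ → ℝ} {c : ℝ} (hc : 0 ≤ c)
    (hf : ∀ x ∈ spectrum ℝ a, f x ∈ Set.Icc 0 c) : ‖cfc f a‖ ≤ c :=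
  norm_cfc_le hc fun x hx => by
    rw [Real.norm_of_nonneg (hf x hx).1]
    exact (hf x hx).2

lemma cfc_one_sub_const_mul_pow {a : A} (ha : IsSelfAdjoint a) (γ : ℝ) (k : ℕ) :
    cfc (fun x : ℝ => (1 - γ * x) ^ k) a = (1 - (γ : ℂ) • a) ^ k := by
  rw [cfc_pow _ k a, cfc_sub _ _ a, cfc_const_one ℝ a, cfc_const_mul_id γ a, Complex.coe_smul]

end CStarAlgebra

lemma Gbar_eq_cfc {H : Type*} [NormedAddCommGroup H] [InnerProductSpace ℂ H] [CompleteSpace H]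
    {Q : H →L[ℂ] H} (hQ : IsSelfAdjoint Q) (γ : ℝ) (T : ℕ) :
    Gbar γ T Q = cfc (gbar γ T) Q := by
  have hinner (t : ℕ) : cfc (fun x : ℝ => γ * ∑ k ∈ range t, (1 - γ * x) ^ k) Q
      = (γ : ℂ) • ∑ k ∈ range t, (1 - (γ : ℂ) • Q) ^ k := by
    rw [cfc_const_mul γ _ Q, ← sum_fn, cfc_sum _ Q, Complex.coe_smul]
    simp only [cfc_one_sub_const_mul_pow hQ]
  unfold gbar
  rw [cfc_const_mul _ _ Q, ← sum_fn, cfc_sum _ Q]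
  simp only [hinner]
  rw [Gbar, ← Complex.coe_smul]
  push_cast
  rfl

theorem filter_operator_bound_general
    {H : Type*} [NormedAddCommGroup H] [InnerProductSpace ℂ H] [CompleteSpace H]
    (Q : H →L[ℂ] H) (hQ : Q.IsPositive)
    (γ : ℝ) (T : ℕ) (hγ : 0 < γ) (hTeven : Even T)
    (hγQ : γ * ‖Q‖ ≤ 1) :
    ‖(Q + ((γ * (T : ℝ))⁻¹ : ℝ) • (1 : H →L[ℂ] H)) * Gbar γ T Q‖ ≤ 3 ∧
      ‖Q * Gbar γ T Q‖ ≤ 1 ∧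
      ‖Gbar γ T Q‖ ≤ γ * (T : ℝ) := by
  have hspec : ∀ x ∈ spectrum ℝ Q, 1 - γ * x ∈ Set.Icc 0 1 := fun x hx => by
    obtain ⟨hx0, hxQ⟩ := spectrum_subset_Icc_norm (Q.nonneg_iff_isPositive.2 hQ) hx
    exact ⟨sub_nonneg.2 ((mul_le_mul_of_nonneg_left hxQ hγ.le).trans hγQ),
      sub_le_self _ (mul_nonneg hγ.le hx0)⟩
  have hG : Gbar γ T Q = cfc (gbar γ T) Q := Gbar_eq_cfc hQ.isSelfAdjoint γ T
  have hQG : Q * Gbar γ T Q = cfc (fun x => x * gbar γ T x) Q := by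
    rw [hG, cfc_mul _ _ Q, cfc_id' ℝ Q hQ.isSelfAdjoint]
  have hnormG : ‖Gbar γ T Q‖ ≤ γ * T := hG ▸ norm_cfc_le_of_mem_Icc (by positivity)
    fun x hx => gbar_mem_Icc hγ.le hTeven (hspec x hx)
  have hnormQG : ‖Q * Gbar γ T Q‖ ≤ 1 := hQG ▸ norm_cfc_le_of_mem_Icc zero_le_one
    fun x hx => mul_gbar_mem_Icc hTeven (hspec x hx)
  refine ⟨?_, hnormQG, hnormG⟩
  calc ‖(Q + ((γ * (T : ℝ))⁻¹ : ℝ) • (1 : H →L[ℂ] H)) * Gbar γ T Q‖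
      = ‖Q * Gbar γ T Q + (γ * (T : ℝ))⁻¹ • Gbar γ T Q‖ := by
        rw [add_mul, smul_mul_assoc, one_mul]
    _ ≤ 1 + 1 := by
      refine norm_add_le_of_le hnormQG ?_
      rw [norm_smul, Real.norm_of_nonneg (by positivity)]
      exact inv_mul_le_one_of_le₀ hnormG (by positivity)
    _ ≤ 3 := by norm_num

/-- filter-operator bound for the tail-averaged GD filter;
Lemma 2 of Mücke–Neu–Rosasco with K = 3.
For a bounded positive self-adjoint operator `Q`, `γ > 0`, a positive even integer
`T` with `γ‖Q‖ ≤ 1`, and `λ = (γT)⁻¹`: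
`‖(Q + λI) Ḡ_T(Q)‖ ≤ 3`, `‖Q Ḡ_T(Q)‖ ≤ 1`, and `‖Ḡ_T(Q)‖ ≤ γT`. -/
theorem filter_operator_bound
    {H : Type*} [NormedAddCommGroup H] [InnerProductSpace ℂ H] [CompleteSpace H]
    (Q : H →L[ℂ] H) (hQ : Q.IsPositive)
    (γ : ℝ) (T : ℕ) (hγ : 0 < γ) (hT : 0 < T) (hTeven : Even T)
    (hγQ : γ * ‖Q‖ ≤ 1) :
    ‖(Q + ((γ * (T : ℝ))⁻¹ : ℝ) • (1 : H →L[ℂ] H)) * Gbar γ T Q‖ ≤ 3 ∧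
      ‖Q * Gbar γ T Q‖ ≤ 1 ∧
      ‖Gbar γ T Q‖ ≤ γ * (T : ℝ) :=
  filter_operator_bound_general Q hQ γ T hγ hTeven hγQ
end
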